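/- arXiv:1703.10505 — 3 statements merged into one kernel-verified Lean document; each statement's English description precedes it below -/
import Mathlib

section
/- Let V be a locally compact Hausdorff space and let A be a closed *-subalgebra of C₀(V, K(H)) (where H = ℓ²(ℤ, ℂ)) such that C₀(V, 𝒟) ⊆ A. For every a ∈ A and all i, j ∈ ℤ, the function n_{ij} : V → K(H) defined by n_{ij}(p) = P_i a(p) P_j belongs to A, and for every b ∈ C₀(V, 𝒟) one has n_{ij} b (n_{ij})* ∈ C₀(V, 𝒟) and (n_{ij})* b n_{ij} ∈ C₀(V, 𝒟); that is, each n_{ij} lies in the normalizer N_A(C₀(V, 𝒟)). -/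
set_option maxHeartbeats 1000000
set_option synthInstance.maxHeartbeats 400000

open scoped ZeroAtInfty

noncomputable section

/-- The Hilbert space `H = ℓ²(ℤ, ℂ)`. -/
abbrev Hsp : Type := lp (fun _ : ℤ => ℂ) 2

/-- The bounded linear operators on `H = ℓ²(ℤ, ℂ)`. -/
abbrev Op : Type := Hsp →L[ℂ] Hsp

/-- The standard orthonormal basis `(e i)_{i ∈ ℤ}` of `ℓ²(ℤ, ℂ)`. -/
def e (i : ℤ) : Hsp := lp.single 2 i (1 : ℂ)

/-- The set `𝒟` of diagonal compact operators on `ℓ²(ℤ, ℂ)`: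
compact operators `T` with `T eᵢ ∈ ℂ eᵢ` for all `i`. -/
def Dset : Set Op := {T | IsCompactOperator T ∧ ∀ i : ℤ, ∃ c : ℂ, T (e i) = c • e i}

variable (M : Type) [TopologicalSpace M]

/-- The subset of `C₀(M, B(H))` consisting of compact-operator valued functions;
this is `C₀(M, K(H))`. -/
def CK : Set C₀(M, Op) := {a | ∀ p : M, IsCompactOperator (a p)}

/-- The subset of `C₀(M, B(H))` consisting of diagonal compact-operator valued functions;
this is `C₀(M, 𝒟)`. -/
def CD : Set C₀(M, Op) := {b | ∀ p : M, b p ∈ Dset}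

/-- Positivity of an element of `C₀(M, B(H))`: all of its values are positive operators. -/
def IsPos (u : C₀(M, Op)) : Prop := ∀ p : M, (u p).IsPositive

/-- `B` is a Cartan subalgebra of `A` (both viewed as subsets of the ambient C*-algebra
`C₀(M, B(H))`): `B` is a closed *-subalgebra of `A` which is (i) commutative, (ii) contains an
approximate unit of `A`, (iii) is maximal abelian in `A`, (iv) is regular in `A` (the smallest
closed *-subalgebra of `A` containing the normalizer `N_A(B)` is `A` itself), and (v) is the
image of a faithful conditional expectation defined on `A`. -/
def IsCartanSubalgebraIn (A B : Set C₀(M, Op)) : Prop :=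
  B ⊆ A ∧ IsClosed B ∧ (0 : C₀(M, Op)) ∈ B ∧
  (∀ x ∈ B, ∀ y ∈ B, x + y ∈ B) ∧
  (∀ (c : ℂ), ∀ x ∈ B, c • x ∈ B) ∧
  (∀ x ∈ B, ∀ y ∈ B, x * y ∈ B) ∧
  (∀ x ∈ B, star x ∈ B) ∧
  -- (i) commutative
  (∀ x ∈ B, ∀ y ∈ B, x * y = y * x) ∧
  -- (ii) contains an approximate unit of `A`
  (∀ F : Finset C₀(M, Op), ↑F ⊆ A → ∀ ε : ℝ, 0 < ε →
    ∃ u ∈ B, IsPos M u ∧ ‖u‖ ≤ 1 ∧ ∀ a ∈ F, ‖u * a - a‖ < ε ∧ ‖a * u - a‖ < ε) ∧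
  -- (iii) maximal abelian in `A`
  (∀ a ∈ A, (∀ b ∈ B, a * b = b * a) → a ∈ B) ∧
  -- (iv) regular in `A`
  closure (↑(NonUnitalStarAlgebra.adjoin ℂ
      {n : C₀(M, Op) | n ∈ A ∧ (∀ b ∈ B, n * b * star n ∈ B) ∧ ∀ b ∈ B, star n * b * n ∈ B}) :
      Set C₀(M, Op)) = A ∧
  -- (v) faithful conditional expectation from `A` onto `B`
  ∃ E : C₀(M, Op) → C₀(M, Op),
    (∀ a ∈ A, ∀ a' ∈ A, E (a + a') = E a + E a') ∧
    (∀ (c : ℂ), ∀ a ∈ A, E (c • a) = c • E a) ∧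
    ContinuousOn E A ∧
    (∀ a ∈ A, ‖E a‖ ≤ ‖a‖) ∧
    (∀ a ∈ A, E a ∈ B) ∧
    (∀ b ∈ B, E b = b) ∧
    (∀ a ∈ A, IsPos M a → IsPos M (E a)) ∧
    (∀ a ∈ A, E (star a * a) = 0 → a = 0)



/-- The rank-one orthogonal projection of `ℓ²(ℤ, ℂ)` onto `ℂ eᵢ`. -/
def Pproj (i : ℤ) : Op := (innerSL ℂ (e i)).smulRight (e i)

/-! `n = (p ↦ Pᵢ a(p) Pⱼ)` lies in `A` because it is the uniform limit, as `ε → 0`, of `dᵢ a dⱼ`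
with the diagonal cutoffs `dₜ(p) = min 1 (‖n(p)‖ / ε) • Pₜ ∈ C₀(V, 𝒟)`: `dᵢ a dⱼ` agrees with `n`
wherever `‖n(p)‖ ≥ ε`. It normalizes `C₀(V, 𝒟)` because `n b n*` and `n* b n` are pointwise of the
form `Pₖ S Pₖ`, a multiple of the rank-one projection `Pₖ`. -/

namespace ZeroAtInftyContinuousMap

variable {α β γ : Type*} [TopologicalSpace α]

def compLeft [TopologicalSpace β] [Zero β] [TopologicalSpace γ] [Zero γ]
    (g : C(β, γ)) (hg : g 0 = 0) (f : C₀(α, β)) : C₀(α, γ) where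
  toContinuousMap := g.comp f
  zero_at_infty' := by simpa [hg] using (g.continuous.tendsto 0).comp (zero_at_infty f)

lemma dist_le [PseudoMetricSpace β] [Zero β] {f g : C₀(α, β)} {C : ℝ} (hC : 0 ≤ C) :
    dist f g ≤ C ↔ ∀ x, dist (f x) (g x) ≤ C := by
  rw [← dist_toBCF_eq_dist]
  exact BoundedContinuousFunction.dist_le hC

end ZeroAtInftyContinuousMap

lemma norm_sub_min_one_sq_smul_le {E : Type*} [SeminormedAddCommGroup E] [NormedSpace ℝ E]
    (v : E) {ε : ℝ} (hε : 0 < ε) : ‖v - min 1 (‖v‖ / ε) ^ 2 • v‖ ≤ ε := by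
  set c := min 1 (‖v‖ / ε)
  have hc₀ : 0 ≤ c := le_min zero_le_one (by positivity)
  have hc₁ : c ≤ 1 := min_le_left _ _
  have hnorm : ‖v - c ^ 2 • v‖ = (1 - c ^ 2) * ‖v‖ := by
    rw [← Real.norm_of_nonneg (by nlinarith : 0 ≤ 1 - c ^ 2), ← norm_smul, sub_smul, one_smul]
  rw [hnorm]
  rcases le_or_gt ε ‖v‖ with hv | hv
  · simpa [c, min_eq_left ((one_le_div hε).2 hv)] using hε.le
  · nlinarith [norm_nonneg v]

lemma Pproj_apply (i : ℤ) (x : Hsp) : Pproj i x = inner ℂ (e i) x • e i := rfl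

lemma inner_e (i k : ℤ) : inner ℂ (e i) (e k) = if i = k then 1 else 0 := by
  rw [e, e, lp.inner_single_left]
  simp [lp.single_apply, Pi.single_apply]

lemma Pproj_e_self (i : ℤ) : Pproj i (e i) = e i := by
  rw [Pproj_apply, inner_e, if_pos rfl, one_smul]

lemma Pproj_e_of_ne {i k : ℤ} (h : k ≠ i) : Pproj i (e k) = 0 := by
  rw [Pproj_apply, inner_e, if_neg h.symm, zero_smul]

lemma isCompactOperator_Pproj (i : ℤ) : IsCompactOperator (Pproj i) :=
  (isCompactOperator_of_locallyCompactSpace_dom (innerSL ℂ (e i))).continuous_comp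
    (continuous_id.smul continuous_const)

lemma isSelfAdjoint_Pproj (i : ℤ) : IsSelfAdjoint (Pproj i) := by
  rw [IsSelfAdjoint, ContinuousLinearMap.star_eq_adjoint, eq_comm,
    ContinuousLinearMap.eq_adjoint_iff]
  intro x y
  simp only [Pproj_apply, inner_smul_left, inner_smul_right, inner_conj_symm]
  ring

lemma smul_Pproj_mem_Dset (c : ℂ) (i : ℤ) : c • Pproj i ∈ Dset := by
  refine ⟨(isCompactOperator_Pproj i).smul c, fun k => ?_⟩
  rcases eq_or_ne k i with rfl | h
  · exact ⟨c, by simp [Pproj_e_self]⟩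
  · exact ⟨0, by simp [Pproj_e_of_ne h]⟩

lemma Pproj_mul_mul_Pproj_mem_Dset (i : ℤ) (S : Op) : Pproj i * S * Pproj i ∈ Dset := by
  refine ⟨(isCompactOperator_Pproj i).comp_clm (S * Pproj i), fun k => ?_⟩
  rcases eq_or_ne k i with rfl | h
  · exact ⟨inner ℂ (e k) (S (Pproj k (e k))), rfl⟩
  · exact ⟨0, by simp [Pproj_e_of_ne h]⟩

section Compress

variable {V : Type} [TopologicalSpace V]

def compress (i j : ℤ) (a : C₀(V, Op)) : C₀(V, Op) :=
  ZeroAtInftyContinuousMap.compLeft ⟨fun T => Pproj i * T * Pproj j, by fun_prop⟩ (by simp) a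

lemma compress_apply (i j : ℤ) (a : C₀(V, Op)) (p : V) :
    compress i j a p = Pproj i * a p * Pproj j :=
  rfl

lemma star_compress (i j : ℤ) (a : C₀(V, Op)) : star (compress i j a) = compress j i (star a) := by
  ext1 p
  simp only [ZeroAtInftyContinuousMap.star_apply, compress_apply, star_mul,
    (isSelfAdjoint_Pproj _).star_eq, mul_assoc]

lemma compress_mul_mul_star_mem_CD (i j : ℤ) (a b : C₀(V, Op)) :
    compress i j a * b * star (compress i j a) ∈ CD V := by
  intro p
  simpa only [ZeroAtInftyContinuousMap.mul_apply, star_compress, compress_apply,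
    ZeroAtInftyContinuousMap.star_apply, mul_assoc]
    using Pproj_mul_mul_Pproj_mem_Dset i (a p * (Pproj j * (b p * (Pproj j * star (a p)))))

lemma star_compress_mul_mul_compress_mem_CD (i j : ℤ) (a b : C₀(V, Op)) :
    star (compress i j a) * b * compress i j a ∈ CD V := by
  intro p
  simpa only [ZeroAtInftyContinuousMap.mul_apply, star_compress, compress_apply,
    ZeroAtInftyContinuousMap.star_apply, mul_assoc]
    using Pproj_mul_mul_Pproj_mem_Dset j (star (a p) * (Pproj i * (b p * (Pproj i * a p))))

def diagCutoff (ε : ℝ) (x : C₀(V, Op)) (t : ℤ) : C₀(V, Op) :=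
  ZeroAtInftyContinuousMap.compLeft
    ⟨fun T => min 1 (‖T‖ / ε) • Pproj t, by fun_prop⟩ (by simp) x

lemma diagCutoff_apply (ε : ℝ) (x : C₀(V, Op)) (t : ℤ) (p : V) :
    diagCutoff ε x t p = min 1 (‖x p‖ / ε) • Pproj t :=
  rfl

lemma diagCutoff_mem_CD (ε : ℝ) (x : C₀(V, Op)) (t : ℤ) : diagCutoff ε x t ∈ CD V := fun p => by
  rw [diagCutoff_apply]
  exact Complex.coe_smul _ (Pproj t) ▸ smul_Pproj_mem_Dset _ t

lemma diagCutoff_mul_mul_diagCutoff_apply (ε : ℝ) (x a : C₀(V, Op)) (i j : ℤ) (p : V) :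
    (diagCutoff ε x i * a * diagCutoff ε x j) p =
      min 1 (‖x p‖ / ε) ^ 2 • (Pproj i * a p * Pproj j) := by
  simp only [ZeroAtInftyContinuousMap.mul_apply, diagCutoff_apply, smul_mul_assoc, mul_smul_comm,
    smul_smul, sq]

lemma compress_mem {A : Set C₀(V, Op)} (hAclosed : IsClosed A)
    (hAmul : ∀ x ∈ A, ∀ y ∈ A, x * y ∈ A) (hD : CD V ⊆ A) {a : C₀(V, Op)} (ha : a ∈ A)
    (i j : ℤ) : compress i j a ∈ A := by
  rw [← hAclosed.closure_eq, Metric.mem_closure_iff]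
  intro ε hε
  let d := diagCutoff (ε / 2) (compress i j a)
  refine ⟨d i * a * d j,
    hAmul _ (hAmul _ (hD (diagCutoff_mem_CD _ _ i)) a ha) _ (hD (diagCutoff_mem_CD _ _ j)), ?_⟩
  calc dist (compress i j a) (d i * a * d j) ≤ ε / 2 := by
        refine (ZeroAtInftyContinuousMap.dist_le (by positivity)).2 fun p => ?_
        rw [dist_eq_norm, diagCutoff_mul_mul_diagCutoff_apply, ← compress_apply]
        exact norm_sub_min_one_sq_smul_le _ (half_pos hε)
    _ < ε := half_lt_self hε

end Compress

theorem compress_mem_normalizer_general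
    (V : Type) [TopologicalSpace V]
    (A : Set C₀(V, Op))
    (hAclosed : IsClosed A)
    (hAmul : ∀ x ∈ A, ∀ y ∈ A, x * y ∈ A)
    (hD : CD V ⊆ A)
    (a : C₀(V, Op)) (ha : a ∈ A) (i j : ℤ) :
    ∃ n : C₀(V, Op),
      (∀ p : V, n p = Pproj i ∘L a p ∘L Pproj j) ∧
      n ∈ A ∧
      (∀ b ∈ CD V, n * b * star n ∈ CD V) ∧
      (∀ b ∈ CD V, star n * b * n ∈ CD V) := by
  refine ⟨compress i j a, fun p => mul_assoc _ _ _, compress_mem hAclosed hAmul hD ha i j,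
    fun b _ => compress_mul_mul_star_mem_CD i j a b,
    fun b _ => star_compress_mul_mul_compress_mem_CD i j a b⟩

/-- Let `V` be a locally compact Hausdorff space and `A` a closed *-subalgebra
of `C₀(V, K(H))` containing `C₀(V, 𝒟)`. For every `a ∈ A` and `i, j ∈ ℤ`, the function
`n_{ij} : p ↦ Pᵢ a(p) Pⱼ` belongs to `A` and normalizes `C₀(V, 𝒟)`; that is,
`n_{ij} ∈ N_A(C₀(V, 𝒟))`. -/
theorem compress_mem_normalizer
    (V : Type) [TopologicalSpace V] [LocallyCompactSpace V] [T2Space V]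
    (A : Set C₀(V, Op))
    (hAK : A ⊆ CK V)
    (hAclosed : IsClosed A)
    (hA0 : (0 : C₀(V, Op)) ∈ A)
    (hAadd : ∀ x ∈ A, ∀ y ∈ A, x + y ∈ A)
    (hAsmul : ∀ (c : ℂ), ∀ x ∈ A, c • x ∈ A)
    (hAmul : ∀ x ∈ A, ∀ y ∈ A, x * y ∈ A)
    (hAstar : ∀ x ∈ A, star x ∈ A)
    (hD : CD V ⊆ A)
    (a : C₀(V, Op)) (ha : a ∈ A) (i j : ℤ) :
    ∃ n : C₀(V, Op),
      (∀ p : V, n p = Pproj i ∘L a p ∘L Pproj j) ∧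
      n ∈ A ∧
      (∀ b ∈ CD V, n * b * star n ∈ CD V) ∧
      (∀ b ∈ CD V, star n * b * n ∈ CD V) :=
  compress_mem_normalizer_general V A hAclosed hAmul hD a ha i j

end
end

section
/- Let V be a nonempty locally compact Hausdorff space and H = ℓ²(ℤ, ℂ). If a ∈ C₀(V, K(H)) satisfies a b = b a for every b ∈ C₀(V, 𝒟), then a ∈ C₀(V, 𝒟). In other words, C₀(V, 𝒟) is maximal abelian in C₀(V, K(H)). -/
set_option maxHeartbeats 1000000
set_option synthInstance.maxHeartbeats 400000

open scoped ZeroAtInfty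

noncomputable section

variable (M : Type) [TopologicalSpace M]

/-!
Fix `p ∈ V` and `i ∈ ℤ`. A Urysohn bump at `p` times the rank-one projection `Pᵢ` onto `ℂ eᵢ` is
an element of `C₀(V, 𝒟)` whose value at `p` is `Pᵢ`, so `a p` commutes with `Pᵢ`; then
`a p eᵢ = a p (Pᵢ eᵢ) = Pᵢ (a p eᵢ) ∈ ℂ eᵢ`.
-/

open InnerProductSpace

theorem exists_zeroAtInfty_apply_eq_smul {X E : Type*} [TopologicalSpace X] [LocallyCompactSpace X]
    [T2Space X] [NormedAddCommGroup E] [NormedSpace ℝ E] (p : X) (x : E) :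
    ∃ b : C₀(X, E), b p = x ∧ ∀ v, ∃ c : ℝ, b v = c • x := by
  obtain ⟨f, hf_one, -, hf_supp, -⟩ :=
    exists_continuous_one_zero_of_isCompact (isCompact_singleton (x := p))
      (isClosed_empty (X := X)) (Set.disjoint_empty _)
  refine ⟨⟨⟨fun v => f v • x, by fun_prop⟩, ?_⟩, ?_, fun v => ⟨f v, rfl⟩⟩
  · simpa using hf_supp.is_zero_at_infty.smul_const x
  · change f p • x = x
    rw [hf_one rfl, Pi.one_apply, one_smul]

theorem isCompactOperator_rankOne {𝕜 E F : Type*} [RCLike 𝕜] [NormedAddCommGroup E]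
    [InnerProductSpace 𝕜 E] [NormedAddCommGroup F] [InnerProductSpace 𝕜 F] (x : E) (y : F) :
    IsCompactOperator (rankOne 𝕜 x y) :=
  (isCompactOperator_of_locallyCompactSpace_dom (innerSL 𝕜 y)).clm_comp
    (ContinuousLinearMap.toSpanSingleton 𝕜 x)

theorem Orthonormal.exists_rankOne_apply_eq_smul {𝕜 E ι : Type*} [RCLike 𝕜]
    [NormedAddCommGroup E] [InnerProductSpace 𝕜 E] {v : ι → E} (hv : Orthonormal 𝕜 v) (i j : ι) :
    ∃ c : 𝕜, rankOne 𝕜 (v i) (v i) (v j) = c • v j := by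
  by_cases h : i = j
  · subst h
    exact ⟨_, rfl⟩
  · exact ⟨0, by simp [hv.2 h]⟩

theorem Commute.apply_eq_inner_smul_of_rankOne {𝕜 E : Type*} [RCLike 𝕜] [NormedAddCommGroup E]
    [InnerProductSpace 𝕜 E] {T : E →L[𝕜] E} {u : E} (hu : ‖u‖ = 1)
    (hT : Commute T (rankOne 𝕜 u u)) : T u = inner 𝕜 u (T u) • u := by
  have hu_fixed : rankOne 𝕜 u u u = u := by
    simp [inner_self_eq_norm_sq_to_K, hu]
  calc T u = T (rankOne 𝕜 u u u) := by rw [hu_fixed]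
    _ = rankOne 𝕜 u u (T u) := DFunLike.congr_fun hT u
    _ = inner 𝕜 u (T u) • u := rankOne_apply u u (T u)

theorem orthonormal_e : Orthonormal ℂ e := by
  classical
  refine orthonormal_iff_ite.mpr fun i j => ?_
  rw [e, e, lp.inner_single_left, lp.single_apply]
  split_ifs with h <;> simp [h]

theorem smul_mem_Dset (c : ℂ) {T : Op} (hT : T ∈ Dset) : c • T ∈ Dset :=
  ⟨hT.1.smul c, fun i => by
    obtain ⟨d, hd⟩ := hT.2 i
    exact ⟨c * d, by rw [smul_apply, hd, mul_smul]⟩⟩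

theorem rankOne_e_mem_Dset (i : ℤ) : rankOne ℂ (e i) (e i) ∈ Dset :=
  ⟨isCompactOperator_rankOne _ _, orthonormal_e.exists_rankOne_apply_eq_smul i⟩

theorem cd_maximal_abelian_general
    (V : Type) [TopologicalSpace V] [LocallyCompactSpace V] [T2Space V]
    (a : C₀(V, Op)) (ha : a ∈ CK V)
    (hcomm : ∀ b ∈ CD V, a * b = b * a) :
    a ∈ CD V := by
  intro p
  refine ⟨ha p, fun i => ?_⟩
  obtain ⟨b, hb_p, hb⟩ := exists_zeroAtInfty_apply_eq_smul p (rankOne ℂ (e i) (e i))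
  have hb_mem : b ∈ CD V := fun v => by
    obtain ⟨c, hc⟩ := hb v
    rw [hc, RCLike.real_smul_eq_coe_smul (K := ℂ)]
    exact smul_mem_Dset _ (rankOne_e_mem_Dset i)
  have hcomm_p : Commute (a p) (rankOne ℂ (e i) (e i)) := by
    show a p * _ = _ * a p
    simpa [hb_p] using congrArg (· p) (hcomm b hb_mem)
  exact ⟨_, hcomm_p.apply_eq_inner_smul_of_rankOne (orthonormal_e.1 i)⟩

/-- Let `V` be a nonempty locally compact Hausdorff space, `H = ℓ²(ℤ, ℂ)`.
If `a ∈ C₀(V, K(H))` commutes with every element of `C₀(V, 𝒟)`, then `a ∈ C₀(V, 𝒟)`;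
that is, `C₀(V, 𝒟)` is maximal abelian in `C₀(V, K(H))`. -/
theorem cd_maximal_abelian
    (V : Type) [TopologicalSpace V] [LocallyCompactSpace V] [T2Space V] [Nonempty V]
    (a : C₀(V, Op)) (ha : a ∈ CK V)
    (hcomm : ∀ b ∈ CD V, a * b = b * a) :
    a ∈ CD V :=
  cd_maximal_abelian_general V a ha hcomm

end
end

section
/- Let A be a C*-algebra, B ⊆ A a closed subalgebra, and I ⊆ A a closed two-sided ideal. Assume that I ∩ B contains an approximate unit of I, in the sense that for every x ∈ I and every ε > 0 there exists h ∈ I ∩ B with h positive, ‖h‖ ≤ 1, and ‖h x − x‖ < ε and ‖x h − x‖ < ε. Then for every n ∈ I satisfying n (I ∩ B) n* ⊆ I ∩ B and n* (I ∩ B) n ⊆ I ∩ B, and for every b ∈ B, one has n b n* ∈ I ∩ B and n* b n ∈ I ∩ B. In particular, the normalizer N_I(I ∩ B) is contained in the normalizer N_A(B). -/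
/-!
Write `U` for the self-adjoint elements of `I ∩ B`. For `u ∈ U` we have
`(n u) b (n u)* = n (u b u) n*`, and `u b u ∈ I ∩ B`, so this lies in `I ∩ B` by assumption.
The approximate unit makes `n` a limit of elements `n u` with `u ∈ U`, so by continuity of
`y ↦ y b y*` and closedness of `I ∩ B` also `n b n* ∈ I ∩ B`. Taking adjoints, `n*` is a limit
of elements `n* u`, which gives `n* b n ∈ I ∩ B` in the same way.
-/

open Set

section

variable {A : Type*} [NonUnitalNormedRing A]

lemma mem_closure_image_mul_left {x : A} {U : Set A}
    (happrox : ∀ ε > 0, ∃ u ∈ U, ‖x * u - x‖ < ε) : x ∈ closure ((x * ·) '' U) :=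
  Metric.mem_closure_iff.2 fun ε hε =>
    let ⟨u, hu, hlt⟩ := happrox ε hε
    ⟨x * u, mem_image_of_mem _ hu, by rwa [dist_comm, dist_eq_norm]⟩

variable [StarRing A] [ContinuousStar A]

lemma mul_mul_star_mem_of_approx {S U : Set A} (hS : IsClosed S) {m b : A}
    (hU : ∀ u ∈ U, IsSelfAdjoint u) (happrox : ∀ ε > 0, ∃ u ∈ U, ‖m * u - m‖ < ε)
    (hconj : ∀ u ∈ U, m * (u * b * u) * star m ∈ S) : m * b * star m ∈ S := by
  have hmaps : MapsTo (fun y => y * b * star y) ((m * ·) '' U) S := by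
    rintro _ ⟨u, hu, rfl⟩
    simpa only [star_mul, (hU u hu).star_eq, mul_assoc] using hconj u hu
  exact hS.closure_subset (map_mem_closure (f := fun y => y * b * star y) (by fun_prop)
    (mem_closure_image_mul_left happrox) hmaps)

end

theorem normalizer_ideal_subset_normalizer_general
    {A : Type*} [NonUnitalCStarAlgebra A]
    (B : Set A)
    (hBclosed : IsClosed B)
    (hBmul : ∀ x ∈ B, ∀ y ∈ B, x * y ∈ B)
    (I : Set A)
    (hIclosed : IsClosed I)
    (hIright : ∀ x ∈ I, ∀ a : A, x * a ∈ I)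
    -- `I ∩ B` contains an approximate unit of `I`
    (happrox : ∀ x ∈ I, ∀ ε : ℝ, 0 < ε → ∃ h ∈ I ∩ B,
      (∃ v : A, h = star v * v) ∧ ‖h‖ ≤ 1 ∧ ‖h * x - x‖ < ε ∧ ‖x * h - x‖ < ε) :
    ∀ n ∈ I, (∀ b ∈ I ∩ B, n * b * star n ∈ I ∩ B) → (∀ b ∈ I ∩ B, star n * b * n ∈ I ∩ B) →
      ∀ b ∈ B, n * b * star n ∈ I ∩ B ∧ star n * b * n ∈ I ∩ B := by
  intro n hnI hn hnstar b hb
  set U := {u ∈ I ∩ B | IsSelfAdjoint u}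
  have hUsa : ∀ u ∈ U, IsSelfAdjoint u := fun _ hu => hu.2
  have hUsandwich : ∀ u ∈ U, u * b * u ∈ I ∩ B := fun u ⟨⟨huI, huB⟩, _⟩ =>
    ⟨hIright _ (hIright u huI b) u, hBmul _ (hBmul u huB b hb) u huB⟩
  have hunit : ∀ ε > 0, ∃ u ∈ U, ‖u * n - n‖ < ε ∧ ‖n * u - n‖ < ε := fun ε hε => by
    obtain ⟨u, hu, ⟨v, rfl⟩, -, hleft, hright⟩ := happrox n hnI ε hε
    exact ⟨_, ⟨hu, .star_mul_self v⟩, hleft, hright⟩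
  have hS : IsClosed (I ∩ B) := hIclosed.inter hBclosed
  have hright : ∀ ε > 0, ∃ u ∈ U, ‖n * u - n‖ < ε := fun ε hε => by
    obtain ⟨u, hu, -, hright⟩ := hunit ε hε
    exact ⟨u, hu, hright⟩
  have hleft : ∀ ε > 0, ∃ u ∈ U, ‖star n * u - star n‖ < ε := fun ε hε => by
    obtain ⟨u, hu, hleft, -⟩ := hunit ε hε
    refine ⟨u, hu, ?_⟩
    rwa [← (hUsa u hu).star_eq, ← star_mul, ← star_sub, norm_star]
  refine ⟨mul_mul_star_mem_of_approx hS hUsa hright fun u hu => hn _ (hUsandwich u hu), ?_⟩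
  simpa only [star_star] using mul_mul_star_mem_of_approx hS hUsa hleft fun u hu => by
    simpa only [star_star] using hnstar _ (hUsandwich u hu)

/-- Let `A` be a C*-algebra, `B ⊆ A` a closed subalgebra, and `I ⊆ A` a closed
two-sided ideal. If `I ∩ B` contains an approximate unit of `I` (with the approximating elements
positive and of norm at most 1), then every `n ∈ I` normalizing `I ∩ B` satisfies
`n b n* ∈ I ∩ B` and `n* b n ∈ I ∩ B` for every `b ∈ B`; in particular
`N_I(I ∩ B) ⊆ N_A(B)`. -/
theorem normalizer_ideal_subset_normalizer
    {A : Type*} [NonUnitalCStarAlgebra A]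
    (B : Set A)
    (hBclosed : IsClosed B)
    (hB0 : (0 : A) ∈ B)
    (hBadd : ∀ x ∈ B, ∀ y ∈ B, x + y ∈ B)
    (hBsmul : ∀ (c : ℂ), ∀ x ∈ B, c • x ∈ B)
    (hBmul : ∀ x ∈ B, ∀ y ∈ B, x * y ∈ B)
    (I : Set A)
    (hIclosed : IsClosed I)
    (hI0 : (0 : A) ∈ I)
    (hIadd : ∀ x ∈ I, ∀ y ∈ I, x + y ∈ I)
    (hIneg : ∀ x ∈ I, -x ∈ I)
    (hIleft : ∀ x ∈ I, ∀ a : A, a * x ∈ I)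
    (hIright : ∀ x ∈ I, ∀ a : A, x * a ∈ I)
    -- `I ∩ B` contains an approximate unit of `I`
    (happrox : ∀ x ∈ I, ∀ ε : ℝ, 0 < ε → ∃ h ∈ I ∩ B,
      (∃ v : A, h = star v * v) ∧ ‖h‖ ≤ 1 ∧ ‖h * x - x‖ < ε ∧ ‖x * h - x‖ < ε) :
    ∀ n ∈ I, (∀ b ∈ I ∩ B, n * b * star n ∈ I ∩ B) → (∀ b ∈ I ∩ B, star n * b * n ∈ I ∩ B) →
      ∀ b ∈ B, n * b * star n ∈ I ∩ B ∧ star n * b * n ∈ I ∩ B :=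
  normalizer_ideal_subset_normalizer_general B hBclosed hBmul I hIclosed hIright happrox
end
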